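/- For a μ-strongly convex, L-smooth function f with minimizer c⋆, and points c₁,…,cₙ with average gradient direction evaluated at each cᵢ, the inner product bound holds: −(1/n)∑ᵢ ⟨c̄ − c⋆, ∇f(cᵢ)⟩ ≤ −(f(c̄) − f(c⋆)) + ((L+μ)/(2n))∑ᵢ‖c̄ − cᵢ‖² − (μ/4)‖c̄ − c⋆‖². -/
import Mathlib


open Finset RealInnerProductSpace

/-- Inner product bound for μ-strongly convex, L-smooth f with minimizer c⋆. -/
theorem inner_product_descent_bound {d n : ℕ} (hn : 0 < n) (μ L : ℝ) (hμ : 0 < μ) (hL : 0 < L)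
    (f : EuclideanSpace ℝ (Fin d) → ℝ) (g : EuclideanSpace ℝ (Fin d) → EuclideanSpace ℝ (Fin d))
    (hsc : ∀ x y, f x + ⟪g x, y - x⟫ + μ / 2 * ‖y - x‖ ^ 2 ≤ f y)
    (hsm : ∀ x y, f y ≤ f x + ⟪g x, y - x⟫ + L / 2 * ‖y - x‖ ^ 2)
    (cstar : EuclideanSpace ℝ (Fin d)) (hmin : ∀ x, f cstar ≤ f x)
    (c : Fin n → EuclideanSpace ℝ (Fin d)) (cbar : EuclideanSpace ℝ (Fin d)) :
    -((n : ℝ)⁻¹ * ∑ i, ⟪cbar - cstar, g (c i)⟫)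
      ≤ -(f cbar - f cstar) + (L + μ) / (2 * n) * ∑ i, ‖cbar - c i‖ ^ 2
        - μ / 4 * ‖cbar - cstar‖ ^ 2 := by
  set A : ℝ := (f cbar - f cstar) + μ / 4 * ‖cbar - cstar‖ ^ 2 with hA
  have key : ∀ i, A - (L + μ) / 2 * ‖cbar - c i‖ ^ 2 ≤ ⟪cbar - cstar, g (c i)⟫ := by
    intro i
    have h1 := hsm (c i) cbar
    have h2 := hsc (c i) cstar
    have hsplit : ⟪cbar - cstar, g (c i)⟫ = ⟪g (c i), cbar - c i⟫ - ⟪g (c i), cstar - c i⟫ := by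
      rw [real_inner_comm, show cbar - cstar = (cbar - c i) - (cstar - c i) by abel,
        inner_sub_right]
    have htri : ‖cbar - cstar‖ ≤ ‖cbar - c i‖ + ‖c i - cstar‖ := by
      simpa using norm_add_le (cbar - c i) (c i - cstar)
    have hrev : ‖cstar - c i‖ = ‖c i - cstar‖ := norm_sub_rev _ _
    have hsq : ‖cbar - cstar‖ ^ 2 ≤ 2 * ‖cbar - c i‖ ^ 2 + 2 * ‖c i - cstar‖ ^ 2 := by
      nlinarith [norm_nonneg (cbar - c i), norm_nonneg (c i - cstar), norm_nonneg (cbar - cstar),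
        sq_nonneg (‖cbar - c i‖ - ‖c i - cstar‖)]
    have hμ4 := mul_le_mul_of_nonneg_left hsq (by positivity : (0:ℝ) ≤ μ / 4)
    rw [hrev] at h2
    nlinarith [hμ4, h1, h2, hsplit]
  have hsum : (n : ℝ) * A - (L + μ) / 2 * ∑ i, ‖cbar - c i‖ ^ 2
      ≤ ∑ i, ⟪cbar - cstar, g (c i)⟫ := by
    have h := Finset.sum_le_sum (fun i (_ : i ∈ Finset.univ) => key i)
    simpa [Finset.sum_sub_distrib, Finset.mul_sum, Finset.card_univ] using h
  have hn' : (0 : ℝ) < n := by exact_mod_cast hn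
  have h3 := mul_le_mul_of_nonneg_left hsum (by positivity : (0:ℝ) ≤ (n : ℝ)⁻¹)
  have hne : (n : ℝ) ≠ 0 := hn'.ne'
  rw [mul_sub, ← mul_assoc, inv_mul_cancel₀ hne, one_mul] at h3
  have : (n : ℝ)⁻¹ * ((L + μ) / 2 * ∑ i, ‖cbar - c i‖ ^ 2)
      = (L + μ) / (2 * n) * ∑ i, ‖cbar - c i‖ ^ 2 := by
    rw [← mul_assoc, show (n : ℝ)⁻¹ * ((L + μ) / 2) = (L + μ) / (2 * n) by
      rw [mul_comm, ← div_eq_mul_inv, div_div]]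
  rw [this] at h3
  rw [hA] at h3
  linarith
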